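/- arXiv:2411.05837 — 2 statements merged into one kernel-verified Lean document; each statement's English description precedes it below -/
import Mathlib

section
/- For a k-layer neural network f_W(x) = W_k φ(...φ(W_1 x)) with 1-Lipschitz activation φ, φ(0)=0, ‖W_i‖ ≤ B_i, and ‖x‖ ≤ C, the gradient of f_W(x) with respect to the parameters satisfies ‖∇_W f_W(x)‖ ≤ Δ_{k,1}·C, where Δ_{k,1} = Σ_{i=1}^k ∏_{j≠i, j≤k} B_j. -/
open Finset

/-- The `ℓ₂` (spectral) operator norm of a matrix. -/
noncomputable def sNorm {n m : ℕ} (M : Matrix (Fin n) (Fin m) ℝ) : ℝ :=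
  ‖LinearMap.toContinuousLinearMap (Matrix.toEuclideanLin M)‖

/-- A `k`-layer neural network `f_W(x) = W_k φ(W_{k-1} φ(⋯ φ(W_1 x)))` with layer
dimensions `d 0, d 1, …, d k` and weight matrices `W i : ℝ^{d(i+1) × d(i)}`
(so `W 0, …, W (k-1)` are the weights `W_1, …, W_k` of the paper). -/
noncomputable def net (φ : ℝ → ℝ) (d : ℕ → ℕ)
    (W : (i : ℕ) → Matrix (Fin (d (i+1))) (Fin (d i)) ℝ) :
    (k : ℕ) → EuclideanSpace ℝ (Fin (d 0)) → EuclideanSpace ℝ (Fin (d k))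
  | 0 => fun x => x
  | 1 => fun x => Matrix.toEuclideanLin (W 0) x
  | (k+2) => fun x =>
      Matrix.toEuclideanLin (W (k+1)) ((WithLp.equiv 2 _).symm fun j => φ (net φ d W (k+1) x j))

/-- The concatenated parameter vector of the first `k` weight matrices, with the
Euclidean (ℓ₂) norm on the concatenation of all entries. -/
abbrev Params (d : ℕ → ℕ) (k : ℕ) : Type :=
  PiLp 2 (fun i : Fin k => EuclideanSpace ℝ (Fin (d (i.1 + 1)) × Fin (d i.1)))

/-- The weight matrices encoded by a parameter vector (`0` beyond layer `k`). -/
noncomputable def pW (d : ℕ → ℕ) (k : ℕ) (p : Params d k) :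
    (i : ℕ) → Matrix (Fin (d (i+1))) (Fin (d i)) ℝ :=
  fun i => if h : i < k then Matrix.of (fun a b => p ⟨i, h⟩ (a, b)) else 0

/-- The `k`-layer network as a function of its concatenated parameter vector. -/
noncomputable def netP (φ : ℝ → ℝ) (d : ℕ → ℕ) (k : ℕ) (p : Params d k) :
    EuclideanSpace ℝ (Fin (d 0)) → EuclideanSpace ℝ (Fin (d k)) :=
  net φ d (pW d k p) k

/-!
Moving the parameters from `p` to `q` changes the network output by at most
`(∑ᵢ ∏_{j ≠ i} bⱼ) ‖x‖ ‖q - p‖` whenever all weights of `p` and `q` have spectral norm at most `bⱼ`: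
write `W_{k} φ(u) - W'_{k} φ(u') = (W_k - W'_k) φ(u) + W'_k (φ(u) - φ(u'))`, bound `‖φ(u)‖` by the
forward estimate `∏ⱼ bⱼ ‖x‖`, bound `‖φ(u) - φ(u')‖` by induction, and note that the spectral norm
of a single weight block is at most the Euclidean norm of the whole parameter vector. On a ball of
radius `ε` around `p` one may take `bⱼ = Bⱼ + ε`, so the derivative at `p` has norm at most
`(∑ᵢ ∏_{j ≠ i} (Bⱼ + ε)) C`; let `ε → 0`.
-/

open Filter Topology

lemma sNorm_nonneg {n m : ℕ} (M : Matrix (Fin n) (Fin m) ℝ) : 0 ≤ sNorm M := norm_nonneg _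

lemma norm_toEuclideanLin_le {n m : ℕ} (M : Matrix (Fin n) (Fin m) ℝ)
    (v : EuclideanSpace ℝ (Fin m)) : ‖Matrix.toEuclideanLin M v‖ ≤ sNorm M * ‖v‖ :=
  (LinearMap.toContinuousLinearMap (Matrix.toEuclideanLin M)).le_opNorm v

lemma sNorm_add_le {n m : ℕ} (M N : Matrix (Fin n) (Fin m) ℝ) :
    sNorm (M + N) ≤ sNorm M + sNorm N := by
  simp only [sNorm, map_add]
  exact norm_add_le _ _

lemma sNorm_le_frobenius {n m : ℕ} (v : EuclideanSpace ℝ (Fin n × Fin m)) :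
    sNorm (Matrix.of fun a b => v (a, b)) ≤ ‖v‖ := by
  refine ContinuousLinearMap.opNorm_le_bound _ (norm_nonneg v) fun w => ?_
  rw [← sq_le_sq₀ (norm_nonneg _) (by positivity), mul_pow, EuclideanSpace.norm_sq_eq,
    EuclideanSpace.norm_sq_eq, EuclideanSpace.norm_sq_eq, Fintype.sum_prod_type, sum_mul]
  refine sum_le_sum fun a _ => ?_
  simpa [Matrix.toLpLin_apply, Matrix.mulVec, dotProduct]
    using sum_mul_sq_le_sq_mul_sq univ (fun b => v (a, b)) (fun b => w b)

noncomputable def phiMap (φ : ℝ → ℝ) {ι : Type*} (v : EuclideanSpace ℝ ι) : EuclideanSpace ℝ ι :=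
  (WithLp.equiv 2 _).symm fun j => φ (v j)

lemma norm_phiMap_sub_le {φ : ℝ → ℝ} {K : NNReal} (hφ : LipschitzWith K φ) {ι : Type*}
    [Fintype ι] (v w : EuclideanSpace ℝ ι) : ‖phiMap φ v - phiMap φ w‖ ≤ K * ‖v - w‖ := by
  rw [← sq_le_sq₀ (norm_nonneg _) (by positivity), mul_pow, EuclideanSpace.norm_sq_eq,
    EuclideanSpace.norm_sq_eq, mul_sum]
  refine sum_le_sum fun i _ => ?_
  rw [← mul_pow]
  gcongr
  exact hφ.norm_sub_le (v i) (w i)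

lemma norm_phiMap_le {φ : ℝ → ℝ} {K : NNReal} (hφ : LipschitzWith K φ) (hφ0 : φ 0 = 0)
    {ι : Type*} [Fintype ι] (v : EuclideanSpace ℝ ι) : ‖phiMap φ v‖ ≤ K * ‖v‖ := by
  have h0 : phiMap φ (0 : EuclideanSpace ℝ ι) = 0 := by
    ext j
    simp [phiMap, hφ0]
  simpa [h0] using norm_phiMap_sub_le hφ v 0

lemma sum_prod_erase_range_succ_mul {R : Type*} [CommSemiring R] (b c : ℕ → R) (n : ℕ) :
    ∑ i ∈ range (n + 1), (∏ j ∈ (range (n + 1)).erase i, b j) * c i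
      = b n * ∑ i ∈ range n, (∏ j ∈ (range n).erase i, b j) * c i
        + (∏ j ∈ range n, b j) * c n := by
  rw [sum_range_succ, range_add_one, erase_insert notMem_range_self, mul_sum]
  congr 1
  refine sum_congr rfl fun i hi => ?_
  rw [erase_insert_of_ne (by rintro rfl; exact notMem_range_self hi),
    prod_insert (fun h => notMem_range_self (mem_of_mem_erase h)), mul_assoc]

section Network

variable {φ : ℝ → ℝ} {d : ℕ → ℕ}

lemma net_add_two (W : (i : ℕ) → Matrix (Fin (d (i+1))) (Fin (d i)) ℝ)
    (k : ℕ) (x : EuclideanSpace ℝ (Fin (d 0))) :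
    net φ d W (k+2) x = Matrix.toEuclideanLin (W (k+1)) (phiMap φ (net φ d W (k+1) x)) := rfl

lemma norm_net_le (hφ : LipschitzWith 1 φ) (hφ0 : φ 0 = 0)
    (W : (i : ℕ) → Matrix (Fin (d (i+1))) (Fin (d i)) ℝ) (x : EuclideanSpace ℝ (Fin (d 0))) :
    ∀ k, ‖net φ d W k x‖ ≤ (∏ j ∈ range k, sNorm (W j)) * ‖x‖
  | 0 => by simp [net]
  | 1 => by simpa [net] using norm_toEuclideanLin_le (W 0) x
  | k + 2 => by
      have hφu : ‖phiMap φ (net φ d W (k+1) x)‖ ≤ (∏ j ∈ range (k+1), sNorm (W j)) * ‖x‖ :=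
        (by simpa using norm_phiMap_le hφ hφ0 _ : _ ≤ ‖net φ d W (k+1) x‖).trans
          (norm_net_le hφ hφ0 W x (k+1))
      calc ‖net φ d W (k+2) x‖
          ≤ sNorm (W (k+1)) * ‖phiMap φ (net φ d W (k+1) x)‖ := norm_toEuclideanLin_le _ _
        _ ≤ sNorm (W (k+1)) * ((∏ j ∈ range (k+1), sNorm (W j)) * ‖x‖) := by
            gcongr
            exact sNorm_nonneg _
        _ = (∏ j ∈ range (k+2), sNorm (W j)) * ‖x‖ := by
            rw [prod_range_succ _ (k+1)]
            ring

lemma norm_net_sub_net_le (hφ : LipschitzWith 1 φ) (hφ0 : φ 0 = 0)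
    (W W' : (i : ℕ) → Matrix (Fin (d (i+1))) (Fin (d i)) ℝ) (b : ℕ → ℝ)
    (x : EuclideanSpace ℝ (Fin (d 0))) :
    ∀ k, (∀ j < k, sNorm (W j) ≤ b j) → (∀ j < k, sNorm (W' j) ≤ b j) →
      ‖net φ d W k x - net φ d W' k x‖
        ≤ (∑ i ∈ range k, (∏ j ∈ (range k).erase i, b j) * sNorm (W i - W' i)) * ‖x‖
  | 0, _, _ => by simp [net]
  | 1, _, _ => by
      simpa [net, ← LinearMap.sub_apply, ← map_sub] using norm_toEuclideanLin_le (W 0 - W' 0) x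
  | k + 2, hW, hW' => by
      set u := phiMap φ (net φ d W (k+1) x)
      set u' := phiMap φ (net φ d W' (k+1) x)
      have hb : 0 ≤ b (k+1) := (sNorm_nonneg _).trans (hW (k+1) (by omega))
      have hu : ‖u‖ ≤ (∏ j ∈ range (k+1), b j) * ‖x‖ := by
        refine (by simpa using norm_phiMap_le hφ hφ0 _ : ‖u‖ ≤ ‖net φ d W (k+1) x‖).trans
          ((norm_net_le hφ hφ0 W x (k+1)).trans ?_)
        gcongr with j hj
        · exact fun j _ => sNorm_nonneg _
        · exact hW j (by simp at hj; omega)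
      have huu' : ‖u - u'‖ ≤ (∑ i ∈ range (k+1),
          (∏ j ∈ (range (k+1)).erase i, b j) * sNorm (W i - W' i)) * ‖x‖ :=
        (by simpa using norm_phiMap_sub_le hφ _ _ : ‖u - u'‖ ≤ _).trans
          (norm_net_sub_net_le hφ hφ0 W W' b x (k+1)
            (fun j hj => hW j (by omega)) (fun j hj => hW' j (by omega)))
      have hsplit : net φ d W (k+2) x - net φ d W' (k+2) x
          = Matrix.toEuclideanLin (W (k+1) - W' (k+1)) u
            + Matrix.toEuclideanLin (W' (k+1)) (u - u') := by
        rw [net_add_two, net_add_two, map_sub, LinearMap.sub_apply, map_sub]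
        abel
      rw [hsplit, sum_prod_erase_range_succ_mul]
      calc _ ≤ sNorm (W (k+1) - W' (k+1)) * ‖u‖ + sNorm (W' (k+1)) * ‖u - u'‖ :=
            (norm_add_le _ _).trans (add_le_add (norm_toEuclideanLin_le _ _)
              (norm_toEuclideanLin_le _ _))
        _ ≤ sNorm (W (k+1) - W' (k+1)) * ((∏ j ∈ range (k+1), b j) * ‖x‖)
            + b (k+1) * ((∑ i ∈ range (k+1),
                (∏ j ∈ (range (k+1)).erase i, b j) * sNorm (W i - W' i)) * ‖x‖) := by
            gcongr
            · exact sNorm_nonneg _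
            · exact hW' (k+1) (by omega)
        _ = _ := by ring

lemma pW_sub (k : ℕ) (q p : Params d k) (i : ℕ) : pW d k (q - p) i = pW d k q i - pW d k p i := by
  unfold pW
  split_ifs
  · ext
    simp
  · simp

lemma sNorm_pW_le_norm (k : ℕ) (r : Params d k) (i : ℕ) : sNorm (pW d k r i) ≤ ‖r‖ := by
  unfold pW
  split_ifs with h
  · exact (sNorm_le_frobenius (r ⟨i, h⟩)).trans (PiLp.norm_apply_le r ⟨i, h⟩)
  · simp [sNorm]

lemma norm_netP_sub_netP_le (hφ : LipschitzWith 1 φ) (hφ0 : φ 0 = 0) (k : ℕ) (b : ℕ → ℝ)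
    (x : EuclideanSpace ℝ (Fin (d 0))) (q p : Params d k)
    (hq : ∀ j < k, sNorm (pW d k q j) ≤ b j) (hp : ∀ j < k, sNorm (pW d k p j) ≤ b j) :
    ‖netP φ d k q x - netP φ d k p x‖
      ≤ (∑ i ∈ range k, ∏ j ∈ (range k).erase i, b j) * ‖x‖ * ‖q - p‖ := by
  calc _ ≤ (∑ i ∈ range k, (∏ j ∈ (range k).erase i, b j) * sNorm (pW d k q i - pW d k p i))
          * ‖x‖ := norm_net_sub_net_le hφ hφ0 _ _ b x k hq hp
    _ ≤ (∑ i ∈ range k, (∏ j ∈ (range k).erase i, b j) * ‖q - p‖) * ‖x‖ := by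
        gcongr with i _
        · exact prod_nonneg fun j hj =>
            (sNorm_nonneg _).trans (hp j (mem_range.mp (mem_of_mem_erase hj)))
        · rw [← pW_sub]
          exact sNorm_pW_le_norm k _ i
    _ = _ := by rw [← sum_mul]; ring

lemma norm_fderiv_netP_le_of_pos (hφ : LipschitzWith 1 φ) (hφ0 : φ 0 = 0) (k : ℕ)
    (B : ℕ → ℝ) (C : ℝ) (x : EuclideanSpace ℝ (Fin (d 0))) (hx : ‖x‖ ≤ C) (p : Params d k)
    (hp : ∀ i : Fin k, sNorm (pW d k p i.1) ≤ B i.1) {ε : ℝ} (hε : 0 < ε) :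
    ‖fderiv ℝ (fun q : Params d k => netP φ d k q x) p‖
      ≤ (∑ i ∈ range k, ∏ j ∈ (range k).erase i, (B j + ε)) * C := by
  have hB : ∀ j < k, 0 ≤ B j + ε := fun j hj => by
    linarith [(sNorm_nonneg _).trans (hp ⟨j, hj⟩)]
  have hS : 0 ≤ ∑ i ∈ range k, ∏ j ∈ (range k).erase i, (B j + ε) :=
    sum_nonneg fun i _ => prod_nonneg fun j hj => hB j (mem_range.mp (mem_of_mem_erase hj))
  refine norm_fderiv_le_of_lip' ℝ (mul_nonneg hS ((norm_nonneg x).trans hx)) ?_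
  filter_upwards [Metric.ball_mem_nhds p hε] with q hq
  rw [mem_ball_iff_norm] at hq
  have hWp : ∀ j < k, sNorm (pW d k p j) ≤ B j + ε := fun j hj => by
    linarith [hp ⟨j, hj⟩]
  have hWq : ∀ j < k, sNorm (pW d k q j) ≤ B j + ε := fun j hj =>
    calc sNorm (pW d k q j) = sNorm (pW d k p j + pW d k (q - p) j) := by
          rw [pW_sub, add_sub_cancel]
      _ ≤ sNorm (pW d k p j) + sNorm (pW d k (q - p) j) := sNorm_add_le _ _
      _ ≤ B j + ε := add_le_add (hp ⟨j, hj⟩) ((sNorm_pW_le_norm k _ j).trans hq.le)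
  refine (norm_netP_sub_netP_le hφ hφ0 k _ x q p hWq hWp).trans ?_
  gcongr

end Network

theorem net_param_grad_norm_le_general (φ : ℝ → ℝ)
    (hφ : LipschitzWith 1 φ) (hφ0 : φ 0 = 0)
    (d : ℕ → ℕ) (k : ℕ) (B : ℕ → ℝ) (C : ℝ)
    (x : EuclideanSpace ℝ (Fin (d 0))) (hx : ‖x‖ ≤ C)
    (p : Params d k)
    (hp : ∀ i : Fin k, sNorm (pW d k p i.1) ≤ B i.1) :
    ‖fderiv ℝ (fun q : Params d k => netP φ d k q x) p‖
      ≤ (∑ i ∈ range k, ∏ j ∈ (range k).erase i, B j) * C := by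
  have hlim : Tendsto (fun ε => (∑ i ∈ range k, ∏ j ∈ (range k).erase i, (B j + ε)) * C)
      (𝓝[>] 0) (𝓝 ((∑ i ∈ range k, ∏ j ∈ (range k).erase i, B j) * C)) := by
    have hcont : Continuous fun ε => (∑ i ∈ range k, ∏ j ∈ (range k).erase i, (B j + ε)) * C := by
      fun_prop
    simpa using (hcont.tendsto 0).mono_left nhdsWithin_le_nhds
  exact ge_of_tendsto hlim (eventually_nhdsWithin_of_forall fun ε hε =>
    norm_fderiv_netP_le_of_pos hφ hφ0 k B C x hx p hp hε)

/-- For a `k`-layer network with differentiable `1`-Lipschitz activation `φ`,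
`φ 0 = 0`, weight spectral norms at most `B i`, and `‖x‖ ≤ C`, the gradient of
`f_W(x)` with respect to the concatenated parameter vector satisfies
`‖∇_W f_W(x)‖ ≤ Δ_{k,1} C` where `Δ_{k,1} = ∑_{i=1}^k ∏_{j ≠ i} B_j`. -/
theorem net_param_grad_norm_le (φ : ℝ → ℝ) (hφdiff : Differentiable ℝ φ)
    (hφ : LipschitzWith 1 φ) (hφ0 : φ 0 = 0)
    (d : ℕ → ℕ) (k : ℕ) (B : ℕ → ℝ) (C : ℝ)
    (x : EuclideanSpace ℝ (Fin (d 0))) (hx : ‖x‖ ≤ C)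
    (p : Params d k)
    (hp : ∀ i : Fin k, sNorm (pW d k p i.1) ≤ B i.1) :
    ‖fderiv ℝ (fun q : Params d k => netP φ d k q x) p‖
      ≤ (∑ i ∈ range k, ∏ j ∈ (range k).erase i, B j) * C :=
  net_param_grad_norm_le_general φ hφ hφ0 d k B C x hx p hp
end

section
/- Input-Lipschitzness of the input gradient: for a k-layer network f_W(x) = W_k φ(...φ(W_1 x)) with 1-Lipschitz, 1-smooth activation φ, φ(0)=0, and ‖W_i‖ ≤ B_i, we have ‖∇_x f_W(x) - ∇_x f_W(x')‖ ≤ Δ_{k,0}·(Σ_{i=1}^{k-1} Δ_{i,0})·‖x - x'‖ for all inputs x, x', where Δ_{i,0} = ∏_{j=1}^i B_j. -/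
open Finset

/-!
The input gradient of the network is `J_k(x) = W_k D_{k-1}(x) W_{k-1} ⋯ D_1(x) W_1`, where
`D_i(x)` is the diagonal matrix of `φ'` at the `i`-th pre-activation. As `|φ'| ≤ 1`, its norm is
at most `Δ_{k,0}`, so by the mean value theorem the `k`-th pre-activation is `Δ_{k,0}`-Lipschitz.
Splitting
`J_{k+1}(x) - J_{k+1}(x') = W_{k+1} (D_k(x) - D_k(x')) J_k(x) + W_{k+1} D_k(x') (J_k(x) - J_k(x'))`
and using that `φ'` is `1`-Lipschitz, the Lipschitz constant `L_k` of `J_k` satisfies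
`L_{k+1} ≤ B_{k+1} (Δ_{k,0}^2 + L_k)`, which unrolls to the claimed bound.
-/

section Coordinatewise

variable {ι : Type*} [Fintype ι] [DecidableEq ι]

noncomputable def coordMap (φ : ℝ → ℝ) (v : EuclideanSpace ℝ ι) : EuclideanSpace ℝ ι :=
  WithLp.toLp 2 fun i => φ (v i)

noncomputable def diagCLM (a : ι → ℝ) : EuclideanSpace ℝ ι →L[ℝ] EuclideanSpace ℝ ι :=
  Matrix.toEuclideanCLM (n := ι) (𝕜 := ℝ) (Matrix.diagonal a)

theorem norm_diagCLM (a : ι → ℝ) : ‖diagCLM a‖ = ‖a‖ :=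
  Matrix.l2_opNorm_diagonal a

theorem diagCLM_sub (a b : ι → ℝ) : diagCLM (a - b) = diagCLM a - diagCLM b := by
  rw [diagCLM, diagCLM, diagCLM, ← map_sub, Matrix.diagonal_sub]
  rfl

theorem hasFDerivAt_coordMap {φ : ℝ → ℝ} (hφ : Differentiable ℝ φ) (v : EuclideanSpace ℝ ι) :
    HasFDerivAt (coordMap φ) (diagCLM fun i => deriv φ (v i)) v := by
  rw [← hasFDerivWithinAt_univ, hasFDerivWithinAt_piLp]
  intro i
  rw [hasFDerivWithinAt_univ]
  refine ((hφ (v i)).hasDerivAt.comp_hasFDerivAt v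
    (PiLp.hasFDerivAt_apply (𝕜 := ℝ) 2 v i)).congr_fderiv ?_
  ext w
  simp [diagCLM, Matrix.mulVec_diagonal]

theorem norm_diagCLM_deriv_le {φ : ℝ → ℝ} (hφ' : ∀ t, ‖deriv φ t‖ ≤ 1)
    (v : EuclideanSpace ℝ ι) :
    ‖diagCLM fun i => deriv φ (v i)‖ ≤ 1 := by
  rw [norm_diagCLM]
  exact (pi_norm_le_iff_of_nonneg zero_le_one).2 fun i => hφ' _

theorem norm_diagCLM_comp_sub_le {ψ : ℝ → ℝ} {K : NNReal} (hψ : LipschitzWith K ψ)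
    (u v : EuclideanSpace ℝ ι) :
    ‖(diagCLM fun i => ψ (u i)) - diagCLM fun i => ψ (v i)‖ ≤ K * ‖u - v‖ := by
  rw [← diagCLM_sub, norm_diagCLM]
  refine (pi_norm_le_iff_of_nonneg (by positivity)).2 fun i => ?_
  calc ‖ψ (u i) - ψ (v i)‖ ≤ K * ‖u i - v i‖ := hψ.norm_sub_le _ _
    _ ≤ K * ‖u - v‖ := by gcongr; exact PiLp.norm_apply_le (u - v) i

end Coordinatewise

theorem ContinuousLinearMap.norm_comp_sub_comp_le {𝕜 E F G : Type*} [NontriviallyNormedField 𝕜]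
    [SeminormedAddCommGroup E] [SeminormedAddCommGroup F] [SeminormedAddCommGroup G]
    [NormedSpace 𝕜 E] [NormedSpace 𝕜 F] [NormedSpace 𝕜 G]
    (A A' : F →L[𝕜] G) (B B' : E →L[𝕜] F) :
    ‖A ∘L B - A' ∘L B'‖ ≤ ‖A - A'‖ * ‖B‖ + ‖A'‖ * ‖B - B'‖ := by
  have : A ∘L B - A' ∘L B' = (A - A') ∘L B + A' ∘L (B - B') := by
    rw [sub_comp, comp_sub]; abel
  rw [this]
  exact (norm_add_le _ _).trans (add_le_add (opNorm_comp_le _ _) (opNorm_comp_le _ _))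

noncomputable def matrixCLM {n m : ℕ} (M : Matrix (Fin n) (Fin m) ℝ) :
    EuclideanSpace ℝ (Fin m) →L[ℝ] EuclideanSpace ℝ (Fin n) :=
  LinearMap.toContinuousLinearMap (Matrix.toEuclideanLin M)

section Network

variable {φ : ℝ → ℝ} {d : ℕ → ℕ} {W : (i : ℕ) → Matrix (Fin (d (i+1))) (Fin (d i)) ℝ}

theorem net_add_two_s16 (k : ℕ) :
    net φ d W (k+2) = matrixCLM (W (k+1)) ∘ coordMap φ ∘ net φ d W (k+1) :=
  rfl

theorem hasFDerivAt_net_add_two (hφ : Differentiable ℝ φ) {k : ℕ}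
    {x : EuclideanSpace ℝ (Fin (d 0))}
    {G : EuclideanSpace ℝ (Fin (d 0)) →L[ℝ] EuclideanSpace ℝ (Fin (d (k+1)))}
    (hG : HasFDerivAt (net φ d W (k+1)) G x) :
    HasFDerivAt (net φ d W (k+2))
      (matrixCLM (W (k+1)) ∘L (diagCLM fun i => deriv φ (net φ d W (k+1) x i)) ∘L G) x := by
  rw [net_add_two_s16]
  exact (matrixCLM (W (k+1))).hasFDerivAt.comp x ((hasFDerivAt_coordMap hφ _).comp x hG)

theorem differentiable_net (hφ : Differentiable ℝ φ) : ∀ k, Differentiable ℝ (net φ d W k)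
  | 0 => differentiable_id
  | 1 => (matrixCLM (W 0)).differentiable
  | k+2 => fun x =>
    (hasFDerivAt_net_add_two hφ (differentiable_net hφ (k+1) x).hasFDerivAt).differentiableAt

theorem fderiv_net_zero (x : EuclideanSpace ℝ (Fin (d 0))) :
    fderiv ℝ (net φ d W 0) x = ContinuousLinearMap.id ℝ _ :=
  fderiv_id

theorem fderiv_net_one (x : EuclideanSpace ℝ (Fin (d 0))) :
    fderiv ℝ (net φ d W 1) x = matrixCLM (W 0) :=
  (matrixCLM (W 0)).fderiv

theorem fderiv_net_add_two (hφ : Differentiable ℝ φ) (k : ℕ)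
    (x : EuclideanSpace ℝ (Fin (d 0))) :
    fderiv ℝ (net φ d W (k+2)) x = matrixCLM (W (k+1)) ∘L
      (diagCLM fun i => deriv φ (net φ d W (k+1) x i)) ∘L fderiv ℝ (net φ d W (k+1)) x :=
  (hasFDerivAt_net_add_two hφ (differentiable_net hφ (k+1) x).hasFDerivAt).fderiv

variable {B : ℕ → ℝ}

theorem norm_fderiv_net_le (hφ : Differentiable ℝ φ) (hφ' : ∀ t, ‖deriv φ t‖ ≤ 1) :
    ∀ k, (∀ i < k, sNorm (W i) ≤ B i) → ∀ x, ‖fderiv ℝ (net φ d W k) x‖ ≤ ∏ i ∈ range k, B i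
  | 0, _, x => by
    rw [fderiv_net_zero, prod_range_zero]
    exact ContinuousLinearMap.norm_id_le
  | 1, hW, x => by
    rw [fderiv_net_one, prod_range_one]
    exact hW 0 one_pos
  | k+2, hW, x => by
    rw [fderiv_net_add_two hφ, prod_range_succ, mul_comm]
    set A := matrixCLM (W (k+1))
    set D := diagCLM fun i => deriv φ (net φ d W (k+1) x i)
    set G := fderiv ℝ (net φ d W (k+1)) x
    have hA : ‖A‖ ≤ B (k+1) := hW (k+1) (by omega)
    have hG : ‖G‖ ≤ ∏ i ∈ range (k+1), B i :=
      norm_fderiv_net_le hφ hφ' (k+1) (fun i hi => hW i (by omega)) x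
    calc ‖A ∘L D ∘L G‖ ≤ ‖A‖ * ‖D ∘L G‖ := A.opNorm_comp_le _
      _ ≤ ‖A‖ * (‖D‖ * ‖G‖) := by gcongr; exact D.opNorm_comp_le G
      _ ≤ B (k+1) * (1 * ∏ i ∈ range (k+1), B i) := by
          gcongr
          · exact (norm_nonneg A).trans hA
          · exact norm_diagCLM_deriv_le hφ' _
      _ = B (k+1) * ∏ i ∈ range (k+1), B i := by rw [one_mul]

theorem norm_net_sub_le (hφ : Differentiable ℝ φ) (hφ' : ∀ t, ‖deriv φ t‖ ≤ 1) {k : ℕ}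
    (hW : ∀ i < k, sNorm (W i) ≤ B i) (x x' : EuclideanSpace ℝ (Fin (d 0))) :
    ‖net φ d W k x - net φ d W k x'‖ ≤ (∏ i ∈ range k, B i) * ‖x - x'‖ :=
  convex_univ.norm_image_sub_le_of_norm_fderiv_le (fun y _ => differentiable_net hφ k y)
    (fun y _ => norm_fderiv_net_le hφ hφ' k hW y) (Set.mem_univ x') (Set.mem_univ x)

theorem norm_fderiv_net_sub_le (hφ : Differentiable ℝ φ) (hφ' : ∀ t, ‖deriv φ t‖ ≤ 1)
    (hφsmooth : LipschitzWith 1 (deriv φ)) :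
    ∀ k, (∀ i < k, sNorm (W i) ≤ B i) → ∀ x x',
      ‖fderiv ℝ (net φ d W k) x - fderiv ℝ (net φ d W k) x'‖
        ≤ ((∏ i ∈ range k, B i) * ∑ i ∈ Icc 1 (k-1), ∏ j ∈ range i, B j) * ‖x - x'‖
  | 0, _, x, x' => by simp [fderiv_net_zero]
  | 1, _, x, x' => by simp [fderiv_net_one]
  | k+2, hW, x, x' => by
    rw [fderiv_net_add_two hφ, fderiv_net_add_two hφ, ← ContinuousLinearMap.comp_sub]
    set A := matrixCLM (W (k+1))
    set D := diagCLM fun i => deriv φ (net φ d W (k+1) x i)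
    set D' := diagCLM fun i => deriv φ (net φ d W (k+1) x' i)
    set G := fderiv ℝ (net φ d W (k+1)) x
    set G' := fderiv ℝ (net φ d W (k+1)) x'
    set P := ∏ i ∈ range (k+1), B i
    set S := ∑ i ∈ Icc 1 k, ∏ j ∈ range i, B j
    have hW' : ∀ i < k+1, sNorm (W i) ≤ B i := fun i hi => hW i (by omega)
    have hA : ‖A‖ ≤ B (k+1) := hW (k+1) (by omega)
    have hG : ‖G‖ ≤ P := norm_fderiv_net_le hφ hφ' (k+1) hW' x
    have hD' : ‖D'‖ ≤ 1 := norm_diagCLM_deriv_le hφ' _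
    have hDD : ‖D - D'‖ ≤ P * ‖x - x'‖ := by
      have := norm_diagCLM_comp_sub_le hφsmooth (net φ d W (k+1) x) (net φ d W (k+1) x')
      rw [NNReal.coe_one, one_mul] at this
      exact this.trans (norm_net_sub_le hφ hφ' hW' x x')
    have hGG : ‖G - G'‖ ≤ P * S * ‖x - x'‖ :=
      norm_fderiv_net_sub_le hφ hφ' hφsmooth (k+1) hW' x x'
    calc ‖A ∘L (D ∘L G - D' ∘L G')‖ ≤ ‖A‖ * (‖D - D'‖ * ‖G‖ + ‖D'‖ * ‖G - G'‖) :=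
          (A.opNorm_comp_le _).trans (by gcongr; exact D.norm_comp_sub_comp_le D' G G')
      _ ≤ B (k+1) * (P * ‖x - x'‖ * P + 1 * (P * S * ‖x - x'‖)) := by
          gcongr
          · exact (norm_nonneg A).trans hA
          · exact (norm_nonneg _).trans hDD
      _ = (P * B (k+1) * (S + P)) * ‖x - x'‖ := by ring
      _ = _ := by rw [← prod_range_succ, ← sum_Icc_succ_top (by omega)]; rfl

end Network

theorem simpleGrad_input_lipschitz_general (φ : ℝ → ℝ) (hφdiff : Differentiable ℝ φ)
    (hφ : LipschitzWith 1 φ) (hφsmooth : LipschitzWith 1 (deriv φ))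
    (d : ℕ → ℕ) (W : (i : ℕ) → Matrix (Fin (d (i+1))) (Fin (d i)) ℝ)
    (k : ℕ) (B : ℕ → ℝ) (hW : ∀ i, i < k → sNorm (W i) ≤ B i)
    (x x' : EuclideanSpace ℝ (Fin (d 0))) :
    ‖fderiv ℝ (net φ d W k) x - fderiv ℝ (net φ d W k) x'‖
      ≤ ((∏ i ∈ range k, B i) * ∑ i ∈ Icc 1 (k-1), ∏ j ∈ range i, B j)
          * ‖x - x'‖ :=
  norm_fderiv_net_sub_le hφdiff (fun _ => by simpa using norm_deriv_le_of_lipschitz hφ)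
    hφsmooth k hW x x'

/-- Input-Lipschitzness of the input gradient: for a `k`-layer network with
differentiable, `1`-Lipschitz, `1`-smooth activation `φ`, `φ 0 = 0`, and weight
spectral norms `‖W_i‖ ≤ B_i`, we have
`‖∇_x f_W(x) - ∇_x f_W(x')‖ ≤ Δ_{k,0} (∑_{i=1}^{k-1} Δ_{i,0}) ‖x - x'‖`
for all inputs `x, x'`, where `Δ_{i,0} = ∏_{j=1}^i B_j`. -/
theorem simpleGrad_input_lipschitz (φ : ℝ → ℝ) (hφdiff : Differentiable ℝ φ)
    (hφ : LipschitzWith 1 φ) (hφsmooth : LipschitzWith 1 (deriv φ)) (hφ0 : φ 0 = 0)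
    (d : ℕ → ℕ) (W : (i : ℕ) → Matrix (Fin (d (i+1))) (Fin (d i)) ℝ)
    (k : ℕ) (B : ℕ → ℝ) (hW : ∀ i, i < k → sNorm (W i) ≤ B i)
    (x x' : EuclideanSpace ℝ (Fin (d 0))) :
    ‖fderiv ℝ (net φ d W k) x - fderiv ℝ (net φ d W k) x'‖
      ≤ ((∏ i ∈ range k, B i) * ∑ i ∈ Icc 1 (k-1), ∏ j ∈ range i, B j)
          * ‖x - x'‖ :=
  simpleGrad_input_lipschitz_general φ hφdiff hφ hφsmooth d W k B hW x x'
end
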